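/- Let P and Q be positive joint distributions on 𝒳 × 𝒴 and let 0 ≤ r ≤ E(Q‖P). Then min{ D(Q̄‖Q) : Q̄ a joint distribution on 𝒳 × 𝒴 with E(Q̄‖P) ≤ r } = min{ E(P̄‖Q) : P̄ a joint distribution on 𝒳 × 𝒴 with D(P̄‖P) ≤ r }. -/

import Mathlib

open scoped Classical BigOperators

noncomputable section

variable {X Y : Type*} [Fintype X] [Fintype Y]

/-- `P` is a joint distribution on `X × Y`. -/
def IsDist (P : X × Y → ℝ) : Prop :=
  (∀ z, 0 ≤ P z) ∧ ∑ z : X × Y, P z = 1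

/-- `P` is a positive joint distribution on `X × Y`. -/
def IsPos (P : X × Y → ℝ) : Prop :=
  (∀ z, 0 < P z) ∧ ∑ z : X × Y, P z = 1

/-- The first marginal of a joint distribution. -/
def margX (P : X × Y → ℝ) (x : X) : ℝ := ∑ y : Y, P (x, y)

/-- The second marginal of a joint distribution. -/
def margY (P : X × Y → ℝ) (y : Y) : ℝ := ∑ x : X, P (x, y)

/-- Relative entropy `D(P‖Q)` (natural log; `Real.log 0 = 0` realizes `0·log 0 = 0`). -/
def relEnt (P Q : X × Y → ℝ) : ℝ := ∑ z : X × Y, P z * Real.log (P z / Q z)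

/-- Projected relative entropy `E(P‖Q)`. -/
def projE (P Q : X × Y → ℝ) : ℝ :=
  sInf { d : ℝ | ∃ P' : X × Y → ℝ,
    IsDist P' ∧ margX P' = margX P ∧ margY P' = margY P ∧ d = relEnt P' Q }

/-- `R ∈ ℰ^{xy}(S)` : `R` has the same correlation coordinates as `S`. -/
def SameCorr (R S : X × Y → ℝ) : Prop :=
  ∃ a1 : X → ℝ, ∃ a2 : Y → ℝ,
    ∀ x : X, ∀ y : Y, Real.log (R (x, y) / S (x, y)) = a1 x + a2 y

/-- The type (empirical distribution) of a sequence. -/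
def empDist {n : ℕ} (x : Fin n → X) (a : X) : ℝ :=
  ((Finset.univ.filter fun i => x i = a).card : ℝ) / n

/-- The joint type of a pair of sequences. -/
def empJoint {n : ℕ} (x : Fin n → X) (y : Fin n → Y) (z : X × Y) : ℝ :=
  ((Finset.univ.filter fun i => x i = z.1 ∧ y i = z.2).card : ℝ) / n

/-- Probability of a set under the `n`-fold i.i.d. product of `P`. -/
def prodProb (P : X × Y → ℝ) (n : ℕ) (A : Set ((Fin n → X) × (Fin n → Y))) : ℝ :=
  ∑ z : (Fin n → X) × (Fin n → Y),
    if z ∈ A then ∏ i : Fin n, P (z.1 i, z.2 i) else 0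

/-- `P` is a joint type with denominator `n` (an element of `𝒫ₙ(𝒳 × 𝒴)`). -/
def IsTypeN (n : ℕ) (P : X × Y → ℝ) : Prop :=
  IsDist P ∧ ∀ z : X × Y, ∃ k : ℕ, P z = (k : ℝ) / n

/-- `Eₙ(P̄‖Q)` : projected relative entropy restricted to joint types. -/
def En (n : ℕ) (Pbar Q : X × Y → ℝ) : ℝ :=
  sInf { d : ℝ | ∃ Pt : X × Y → ℝ,
    IsTypeN n Pt ∧ margX Pt = margX Pbar ∧ margY Pt = margY Pbar ∧ d = relEnt Pt Q }

/-- Standard normal cumulative distribution function `Φ`. -/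
def stdNormalCDF (t : ℝ) : ℝ :=
  ∫ u in Set.Iic t, (Real.sqrt (2 * Real.pi))⁻¹ * Real.exp (-(u ^ 2) / 2)

/-- Inverse of the standard normal CDF, `Φ⁻¹`. -/
def stdNormalCDFInv (e : ℝ) : ℝ := Function.invFun stdNormalCDF e

/-! Both sides equal the infimum of `D(Q̄‖Q)` over pairs `(Q̄, P̄)` with equal marginals and
`D(P̄‖P) ≤ r`. Minimizing over `P̄` first gives the left side, since `E(Q̄‖P)` is the minimum of
`D(P̄‖P)` over such `P̄`; minimizing over `Q̄` first gives the right side. The only analytic input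
is that `E(Q̄‖P)` is attained, by compactness of the set of joint distributions with prescribed
marginals and continuity of `D(·‖P)`. -/

lemma mul_log_div_eq_mul_mul_log {p q : ℝ} (hq : q ≠ 0) :
    p * Real.log (p / q) = q * (p / q * Real.log (p / q)) := by
  field_simp

lemma sub_le_mul_log_div {p q : ℝ} (hp : 0 ≤ p) (hq : 0 < q) : p - q ≤ p * Real.log (p / q) :=
  calc p - q = q * (p / q - 1) := by field_simp
    _ ≤ q * (p / q * Real.log (p / q)) :=
      mul_le_mul_of_nonneg_left (Real.self_sub_one_le_mul_log (div_nonneg hp hq.le)) hq.le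
    _ = p * Real.log (p / q) := (mul_log_div_eq_mul_mul_log hq.ne').symm

lemma IsPos.isDist {P : X × Y → ℝ} (hP : IsPos P) : IsDist P :=
  ⟨fun z => (hP.1 z).le, hP.2⟩

lemma relEnt_nonneg {P Q : X × Y → ℝ} (hP : IsDist P) (hQ : IsPos Q) : 0 ≤ relEnt P Q :=
  calc (0 : ℝ) = ∑ z, (P z - Q z) := by rw [Finset.sum_sub_distrib, hP.2, hQ.2, sub_self]
    _ ≤ relEnt P Q := Finset.sum_le_sum fun z _ => sub_le_mul_log_div (hP.1 z) (hQ.1 z)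

lemma relEnt_self (P : X × Y → ℝ) : relEnt P P = 0 :=
  Finset.sum_eq_zero fun z _ => by by_cases h : P z = 0 <;> simp [h]

lemma continuous_relEnt_left {Q : X × Y → ℝ} (hQ : ∀ z, Q z ≠ 0) :
    Continuous fun P : X × Y → ℝ => relEnt P Q := by
  simp only [relEnt, mul_log_div_eq_mul_mul_log (hQ _)]
  fun_prop

def couplings (P : X × Y → ℝ) : Set (X × Y → ℝ) :=
  {P' | IsDist P' ∧ margX P' = margX P ∧ margY P' = margY P}

lemma mem_couplings_self {P : X × Y → ℝ} (hP : IsDist P) : P ∈ couplings P :=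
  ⟨hP, rfl, rfl⟩

lemma mem_couplings_symm {P P' : X × Y → ℝ} (h : P' ∈ couplings P) (hP : IsDist P) :
    P ∈ couplings P' :=
  ⟨hP, h.2.1.symm, h.2.2.symm⟩

lemma isCompact_couplings (P : X × Y → ℝ) : IsCompact (couplings P) :=
  (isCompact_stdSimplex ℝ (X × Y)).inter_right
    ((isClosed_eq (by unfold margX; fun_prop) continuous_const).inter
      (isClosed_eq (by unfold margY; fun_prop) continuous_const))

lemma projE_eq_of_mem_couplings {P P' : X × Y → ℝ} (h : P' ∈ couplings P) (Q : X × Y → ℝ) :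
    projE P' Q = projE P Q := by
  simp only [projE, h.2.1, h.2.2]

lemma projE_le_relEnt {P P' Q : X × Y → ℝ} (hQ : IsPos Q) (h : P' ∈ couplings P) :
    projE P Q ≤ relEnt P' Q :=
  csInf_le ⟨0, by rintro _ ⟨P'', hP'', -, -, rfl⟩; exact relEnt_nonneg hP'' hQ⟩
    ⟨P', h.1, h.2.1, h.2.2, rfl⟩

lemma le_projE {P Q : X × Y → ℝ} {c : ℝ} (hP : IsDist P)
    (h : ∀ P' ∈ couplings P, c ≤ relEnt P' Q) : c ≤ projE P Q :=
  le_csInf ⟨_, P, hP, rfl, rfl, rfl⟩ fun _ ⟨P', h1, h2, h3, hd⟩ => hd ▸ h P' ⟨h1, h2, h3⟩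

lemma projE_nonneg {P Q : X × Y → ℝ} (hP : IsDist P) (hQ : IsPos Q) : 0 ≤ projE P Q :=
  le_projE hP fun _ hP' => relEnt_nonneg hP'.1 hQ

lemma exists_mem_couplings_relEnt_eq_projE {P Q : X × Y → ℝ} (hP : IsDist P) (hQ : IsPos Q) :
    ∃ P' ∈ couplings P, relEnt P' Q = projE P Q := by
  obtain ⟨P', hP', hmin⟩ := (isCompact_couplings P).exists_isMinOn ⟨P, mem_couplings_self hP⟩
    (continuous_relEnt_left fun z => (hQ.1 z).ne').continuousOn
  exact ⟨P', hP', le_antisymm (le_projE hP fun _ h => hmin h) (projE_le_relEnt hQ hP')⟩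

theorem exponent_two_expressions_coincide_general
    (P Q : X × Y → ℝ) (hP : IsPos P) (hQ : IsPos Q)
    (r : ℝ) (hr0 : 0 ≤ r) :
    sInf { d : ℝ | ∃ Qbar : X × Y → ℝ, IsDist Qbar ∧ projE Qbar P ≤ r ∧ d = relEnt Qbar Q }
      = sInf { d : ℝ | ∃ Pbar : X × Y → ℝ, IsDist Pbar ∧ relEnt Pbar P ≤ r ∧ d = projE Pbar Q } := by
  have hPd := hP.isDist
  apply le_antisymm
  · refine le_csInf ⟨projE P Q, P, hPd, by rwa [relEnt_self], rfl⟩ ?_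
    rintro _ ⟨Pbar, hPbar, hD, rfl⟩
    refine le_projE hPbar fun P' hP' => csInf_le ?_ ⟨P', hP'.1, ?_, rfl⟩
    · exact ⟨0, by rintro _ ⟨Qbar, hQbar, -, rfl⟩; exact relEnt_nonneg hQbar hQ⟩
    · exact (projE_le_relEnt hP (mem_couplings_symm hP' hPbar)).trans hD
  · have hPP : projE P P ≤ r :=
      (projE_le_relEnt hP (mem_couplings_self hPd)).trans ((relEnt_self P).trans_le hr0)
    refine le_csInf ⟨relEnt P Q, P, hPd, hPP, rfl⟩ ?_
    rintro _ ⟨Qbar, hQbar, hE, rfl⟩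
    obtain ⟨Pbar, hPbar, hEq⟩ := exists_mem_couplings_relEnt_eq_projE hQbar hP
    refine le_trans (b := projE Pbar Q) (csInf_le ?_ ⟨Pbar, hPbar.1, hEq.trans_le hE, rfl⟩) ?_
    · exact ⟨0, by rintro _ ⟨P', hP', -, rfl⟩; exact projE_nonneg hP' hQ⟩
    calc projE Pbar Q = projE Qbar Q := projE_eq_of_mem_couplings hPbar Q
      _ ≤ relEnt Qbar Q := projE_le_relEnt hQ (mem_couplings_self hQbar)

/-- the two expressions for the exponent function coincide. -/
theorem exponent_two_expressions_coincide
    [Nonempty X] [Nonempty Y]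
    (P Q : X × Y → ℝ) (hP : IsPos P) (hQ : IsPos Q)
    (r : ℝ) (hr0 : 0 ≤ r) (hr1 : r ≤ projE Q P) :
    sInf { d : ℝ | ∃ Qbar : X × Y → ℝ, IsDist Qbar ∧ projE Qbar P ≤ r ∧ d = relEnt Qbar Q }
      = sInf { d : ℝ | ∃ Pbar : X × Y → ℝ, IsDist Pbar ∧ relEnt Pbar P ≤ r ∧ d = projE Pbar Q } :=
  exponent_two_expressions_coincide_general P Q hP hQ r hr0
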